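/- arXiv:1111.1432 — 2 statements merged into one kernel-verified Lean document; each statement's English description precedes it below -/
import Mathlib

section
/- For G ∈ 𝒢* representing a binary string x of length 2^k, the vertices of G are in bijection with a subset of the dyadic substring set S(x) via V ↦ φ_G(V); consequently the number of vertices of G is at most |S(x)| ≤ ∑_{i=0}^k min(2^{k−i}, 2^{2^i}), and hence at most 2^k(2+ε_k)/k for some sequence ε_k → 0 independent of G. -/
/-!
Along any path from the root, `φ` of each vertex sits inside `x = φ(root)` at a position that is
a multiple of its length `2^(k+1-L(V))`, so it is one of the dyadic blocks of `x`, and injectivity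
of `φ` bounds `|V(G)|` by `|S(x)|`.  Level `i` of the dyadic partition has `2^(k-i)` blocks, each
one of at most `2^(2^i)` strings.  Splitting the resulting sum at `M = ⌊log₂ k⌋`, the levels below
`M` contribute `O(2^(k/2))`, and the others at most
`min(2^(k-M), 2^(2^M)) + 2^(k-M) ≤ (2 + O(M/2^M)) 2^k/k`.
-/

/-- The class `𝒢` of level-labeled rooted DAGs used to represent data strings:
finitely many vertices, a root at level 1, exactly two terminal vertices `T0, T1` at a
common level `k+1`, every nonterminal vertex has out-edges labeled `0` and `1` ending at
distinct vertices, levels strictly increase along edges, and every vertex is reachable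
from the root.  (A vertex is terminal iff it equals `T0` or `T1`; `succ0, succ1` are
only meaningful on nonterminal vertices.) -/
structure BDD (V : Type) [Fintype V] [DecidableEq V] where
  k : ℕ
  root : V
  T0 : V
  T1 : V
  succ0 : V → V
  succ1 : V → V
  level : V → ℕ
  k_pos : 1 ≤ k
  T0_ne_T1 : T0 ≠ T1
  root_level : level root = 1
  T0_level : level T0 = k + 1
  T1_level : level T1 = k + 1
  level_le : ∀ v, level v ≤ k + 1
  succ_ne : ∀ v, v ≠ T0 → v ≠ T1 → succ0 v ≠ succ1 v
  level_lt_succ0 : ∀ v, v ≠ T0 → v ≠ T1 → level v < level (succ0 v)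
  level_lt_succ1 : ∀ v, v ≠ T0 → v ≠ T1 → level v < level (succ1 v)
  reachable : ∀ v, Relation.ReflTransGen
    (fun a b => a ≠ T0 ∧ a ≠ T1 ∧ (b = succ0 a ∨ b = succ1 a)) root v

/-- `φ` is the canonical string map of `G`: `φ(T0) = 0`, `φ(T1) = 1`, and for a
nonterminal vertex `V` with `0`- and `1`-successors `V₀, V₁`,
`φ(V) = φ(V₀)^{2^{L(V₀)−L(V)−1}} φ(V₁)^{2^{L(V₁)−L(V)−1}}`
(the defining recursion of the canonical map; it determines `φ` uniquely). -/
def IsPhi {V : Type} [Fintype V] [DecidableEq V] (G : BDD V) (φ : V → List Bool) : Prop :=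
  φ G.T0 = [false] ∧ φ G.T1 = [true] ∧
  ∀ v, v ≠ G.T0 → v ≠ G.T1 →
    φ v = (List.replicate (2 ^ (G.level (G.succ0 v) - G.level v - 1)) (φ (G.succ0 v))).flatten
        ++ (List.replicate (2 ^ (G.level (G.succ1 v) - G.level v - 1)) (φ (G.succ1 v))).flatten

/-- The dyadic substring set `S(x)` of a binary string `x` of length `2^k`. -/
def dyadicSet (k : ℕ) (x : List Bool) : Finset (List Bool) :=
  (Finset.range (k + 1)).biUnion fun i =>
    (Finset.range (2 ^ (k - i))).image fun j => (x.drop (j * 2 ^ i)).take (2 ^ i)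

open Finset Filter Topology

theorem List.IsPrefix.drop_of_append_prefix {α : Type*} {a b y : List α} (h : a ++ b <+: y) :
    b <+: y.drop a.length := by
  obtain ⟨t, rfl⟩ := h
  simp

theorem List.prefix_flatten_replicate {α : Type*} (l : List α) {n : ℕ} (hn : n ≠ 0) :
    l <+: (List.replicate n l).flatten := by
  obtain ⟨m, rfl⟩ := Nat.exists_eq_succ_of_ne_zero hn
  simp [List.replicate_succ]

theorem List.length_flatten_replicate_two_pow {α : Type*} {l : List α} {a b c : ℕ}
    (hab : a < b) (hbc : b ≤ c + 1) (hl : l.length = 2 ^ (c + 1 - b)) :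
    (List.replicate (2 ^ (b - a - 1)) l).flatten.length = 2 ^ (c - a) := by
  rw [List.length_flatten, List.map_replicate, List.sum_replicate, hl, smul_eq_mul, ← pow_add]
  congr 1
  omega

theorem Finset.card_le_pow_of_forall_length_eq {α : Type*} [Fintype α] {s : Finset (List α)}
    {n : ℕ} (hs : ∀ l ∈ s, l.length = n) : #s ≤ Fintype.card α ^ n := by
  simpa [Finset.filter_true_of_mem hs] using Finset.card_filter_length_eq_le (T := s) (s := n)

theorem lt_pow_sub_iff_succ_mul_le {b i j k : ℕ} (hb : 0 < b) (hi : i ≤ k) :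
    j < b ^ (k - i) ↔ (j + 1) * b ^ i ≤ b ^ k := by
  rw [← Nat.pow_div hi hb, Nat.lt_iff_add_one_le, Nat.le_div_iff_mul_le (by positivity)]

theorem mem_dyadicSet_of_prefix {k i p : ℕ} {x l : List Bool} (hx : x.length = 2 ^ k)
    (hi : i ≤ k) (hl : l.length = 2 ^ i) (hp : 2 ^ i ∣ p) (hpre : l <+: x.drop p) :
    l ∈ dyadicSet k x := by
  obtain ⟨j, rfl⟩ := hp
  have hfit : j < 2 ^ (k - i) := by
    have hlen := hpre.length_le
    simp only [List.length_drop, hx, hl] at hlen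
    rw [lt_pow_sub_iff_succ_mul_le two_pos hi, add_mul, one_mul, mul_comm]
    have : 0 < 2 ^ i := by positivity
    omega
  refine Finset.mem_biUnion.2 ⟨i, Finset.mem_range.2 (by omega),
    Finset.mem_image.2 ⟨j, Finset.mem_range.2 hfit, ?_⟩⟩
  rw [List.prefix_iff_eq_take.1 hpre, hl, mul_comm]

def dyadicBound (k : ℕ) : ℕ := ∑ i ∈ range (k + 1), min (2 ^ (k - i)) (2 ^ (2 ^ i))

theorem card_dyadicSet_le {k : ℕ} {x : List Bool} (hx : x.length = 2 ^ k) :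
    #(dyadicSet k x) ≤ dyadicBound k := by
  refine Finset.card_biUnion_le.trans (Finset.sum_le_sum fun i hi => le_min ?_ ?_)
  · exact Finset.card_image_le.trans (by simp)
  · refine (Finset.card_le_pow_of_forall_length_eq fun l hl => ?_).trans_eq
      (by rw [Fintype.card_bool])
    obtain ⟨j, hj, rfl⟩ := Finset.mem_image.1 hl
    have hfit := (lt_pow_sub_iff_succ_mul_le two_pos (Nat.lt_succ_iff.1 (mem_range.1 hi))).1
      (mem_range.1 hj)
    simp only [List.length_take, List.length_drop, hx]
    rw [add_mul] at hfit
    omega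

namespace BDD

variable {V : Type} [Fintype V] [DecidableEq V] (G : BDD V)

theorem one_le_level (v : V) : 1 ≤ G.level v := by
  induction G.reachable v with
  | refl => rw [G.root_level]
  | tail _ e ih =>
    obtain ⟨h0, h1, rfl | rfl⟩ := e
    · exact ih.trans (G.level_lt_succ0 _ h0 h1).le
    · exact ih.trans (G.level_lt_succ1 _ h0 h1).le

end BDD

namespace IsPhi

variable {V : Type} [Fintype V] [DecidableEq V] {G : BDD V} {φ : V → List Bool}

theorem length_eq (hφ : IsPhi G φ) (v : V) : (φ v).length = 2 ^ (G.k + 1 - G.level v) := by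
  by_cases h0 : v = G.T0
  · simp [h0, hφ.1, G.T0_level]
  by_cases h1 : v = G.T1
  · simp [h1, hφ.2.1, G.T1_level]
  have hlt0 := G.level_lt_succ0 v h0 h1
  have hlt1 := G.level_lt_succ1 v h0 h1
  have hle0 := G.level_le (G.succ0 v)
  have hle1 := G.level_le (G.succ1 v)
  rw [hφ.2.2 v h0 h1, List.length_append,
    List.length_flatten_replicate_two_pow hlt0 hle0 (length_eq hφ (G.succ0 v)),
    List.length_flatten_replicate_two_pow hlt1 hle1 (length_eq hφ (G.succ1 v)),
    ← two_mul, ← pow_succ']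
  congr 1
  omega
termination_by G.k + 1 - G.level v
decreasing_by all_goals omega

theorem exists_aligned_prefix (hφ : IsPhi G φ) (v : V) :
    ∃ p, 2 ^ (G.k + 1 - G.level v) ∣ p ∧ φ v <+: (φ G.root).drop p := by
  induction G.reachable v with
  | refl => exact ⟨0, dvd_zero _, by simp⟩
  | @tail u _ _ e ih =>
    obtain ⟨p, hp, hpre⟩ := ih
    obtain ⟨h0, h1, rfl | rfl⟩ := e <;> rw [hφ.2.2 u h0 h1] at hpre
    · refine ⟨p, (pow_dvd_pow 2 (by have := G.level_lt_succ0 u h0 h1; omega)).trans hp, ?_⟩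
      exact ((List.prefix_flatten_replicate _ (by positivity)).trans (List.prefix_append _ _)).trans
        hpre
    · set A :=
        (List.replicate (2 ^ (G.level (G.succ0 u) - G.level u - 1)) (φ (G.succ0 u))).flatten
      have hlt := G.level_lt_succ1 u h0 h1
      have hA : A.length = 2 ^ (G.k - G.level u) := List.length_flatten_replicate_two_pow
        (G.level_lt_succ0 u h0 h1) (G.level_le _) (hφ.length_eq (G.succ0 u))
      refine ⟨p + A.length, dvd_add ((pow_dvd_pow 2 (by omega)).trans hp)
        (hA ▸ pow_dvd_pow 2 (by omega)), ?_⟩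
      rw [← List.drop_drop]
      exact (List.prefix_flatten_replicate _ (by positivity)).trans hpre.drop_of_append_prefix

theorem length_root (hφ : IsPhi G φ) : (φ G.root).length = 2 ^ G.k := by
  simpa [G.root_level] using hφ.length_eq G.root

theorem mem_dyadicSet (hφ : IsPhi G φ) (v : V) : φ v ∈ dyadicSet G.k (φ G.root) := by
  obtain ⟨p, hp, hpre⟩ := hφ.exists_aligned_prefix v
  have := G.one_le_level v
  exact mem_dyadicSet_of_prefix hφ.length_root (by omega) (hφ.length_eq v) hp hpre

end IsPhi

theorem sum_range_two_pow_two_pow_le (M : ℕ) :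
    ∑ i ∈ range M, 2 ^ 2 ^ i ≤ 2 ^ (2 ^ M / 2 + 1) := by
  induction M with
  | zero => simp
  | succ M ih =>
    have hM : 2 ^ M / 2 + 1 ≤ 2 ^ M := by have := M.one_le_two_pow; omega
    calc ∑ i ∈ range (M + 1), 2 ^ 2 ^ i ≤ 2 ^ 2 ^ M + 2 ^ 2 ^ M := by
          rw [sum_range_succ]
          exact Nat.add_le_add_right (ih.trans (Nat.pow_le_pow_right two_pos hM)) _
      _ = 2 ^ (2 ^ (M + 1) / 2 + 1) := by
          rw [pow_succ 2 M, Nat.mul_div_cancel _ two_pos, pow_succ, mul_two]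

theorem dyadicBound_add_le (M t : ℕ) :
    dyadicBound (M + t) ≤ ∑ i ∈ range M, 2 ^ 2 ^ i + min (2 ^ t) (2 ^ 2 ^ M) + 2 ^ t := by
  rw [dyadicBound, add_assoc, sum_range_add, sum_range_succ']
  have hhead :
      ∑ i ∈ range M, min (2 ^ (M + t - i)) (2 ^ 2 ^ i) ≤ ∑ i ∈ range M, 2 ^ 2 ^ i :=
    sum_le_sum fun i _ => min_le_right _ _
  have htail :
      ∑ j ∈ range t, min (2 ^ (M + t - (M + (j + 1)))) (2 ^ 2 ^ (M + (j + 1))) ≤ 2 ^ t :=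
    calc _ ≤ ∑ j ∈ range t, 2 ^ (t - 1 - j) :=
          sum_le_sum fun j _ => (min_le_left _ _).trans_eq (by congr 1; omega)
      _ = ∑ j ∈ range t, 2 ^ j := sum_range_reflect (2 ^ ·) t
      _ ≤ 2 ^ t := (Nat.geomSum_lt le_rfl fun j hj => mem_range.1 hj).le
  simp only [add_zero, Nat.add_sub_cancel_left]
  omega

theorem mul_min_add_le {M t : ℕ} (h : M + t < 2 ^ (M + 1)) :
    (M + t) * (min (2 ^ t) (2 ^ 2 ^ M) + 2 ^ t) ≤ 2 * 2 ^ (M + t) + (4 * M + 4) * 2 ^ t := by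
  have hpow : 2 ^ (M + t) = 2 ^ M * 2 ^ t := pow_add 2 M t
  by_cases ht : M + 1 + 2 ^ M ≤ t
  · -- `2 ^ 2 ^ M` is negligible next to `2 ^ t`
    have hsmall : (M + t) * 2 ^ 2 ^ M ≤ 2 ^ t :=
      calc (M + t) * 2 ^ 2 ^ M ≤ 2 ^ (M + 1) * 2 ^ 2 ^ M := Nat.mul_le_mul_right _ h.le
        _ ≤ 2 ^ t := by rw [← pow_add]; exact Nat.pow_le_pow_right two_pos ht
    have hmin := Nat.mul_le_mul_left (M + t) (min_le_right (2 ^ t) (2 ^ 2 ^ M))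
    have : 2 ^ t ≤ (4 * M + 4) * 2 ^ t := Nat.le_mul_of_pos_left _ (by omega)
    have hmain : (M + t) * 2 ^ t ≤ 2 * 2 ^ (M + t) :=
      calc (M + t) * 2 ^ t ≤ 2 ^ (M + 1) * 2 ^ t := Nat.mul_le_mul_right _ h.le
        _ = 2 * 2 ^ (M + t) := by rw [hpow]; ring
    rw [mul_add]
    omega
  · -- `M + t` exceeds `2 ^ M` by only `O(M)`
    calc (M + t) * (min (2 ^ t) (2 ^ 2 ^ M) + 2 ^ t) ≤ (2 ^ M + 2 * M) * (2 * 2 ^ t) :=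
          Nat.mul_le_mul (by omega) (by have := min_le_left (2 ^ t) (2 ^ 2 ^ M); omega)
      _ = 2 * 2 ^ (M + t) + 4 * M * 2 ^ t := by rw [hpow]; ring
      _ ≤ 2 * 2 ^ (M + t) + (4 * M + 4) * 2 ^ t :=
          Nat.add_le_add_left (Nat.mul_le_mul_right _ (by omega)) _

theorem two_pow_half_mul_sum_le {k M : ℕ} (hM : 2 ^ M ≤ k) :
    2 ^ (k / 2) * (k * ∑ i ∈ range M, 2 ^ 2 ^ i) ≤ (4 * (k / 2) + 4) * 2 ^ k := by
  have hsum : ∑ i ∈ range M, 2 ^ 2 ^ i ≤ 2 * 2 ^ (k / 2) := by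
    rw [← pow_succ']
    exact (sum_range_two_pow_two_pow_le M).trans
      (Nat.pow_le_pow_right two_pos (by have := Nat.div_le_div_right (c := 2) hM; omega))
  have hsq : 2 ^ (k / 2) * 2 ^ (k / 2) ≤ 2 ^ k := by
    rw [← pow_add]; exact Nat.pow_le_pow_right two_pos (by omega)
  calc 2 ^ (k / 2) * (k * ∑ i ∈ range M, 2 ^ 2 ^ i) ≤ 2 ^ (k / 2) * (k * (2 * 2 ^ (k / 2))) :=
        Nat.mul_le_mul_left _ (Nat.mul_le_mul_left _ hsum)
    _ = 2 * k * (2 ^ (k / 2) * 2 ^ (k / 2)) := by ring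
    _ ≤ (4 * (k / 2) + 4) * 2 ^ k := Nat.mul_le_mul (by omega) hsq

noncomputable def decayTerm (m : ℕ) : ℝ := (4 * m + 4) / 2 ^ m

noncomputable def dyadicEps (k : ℕ) : ℝ := decayTerm (k / 2) + decayTerm (Nat.log 2 k)

theorem mul_dyadicBound_le (k : ℕ) : (k : ℝ) * dyadicBound k ≤ 2 ^ k * (2 + dyadicEps k) := by
  rcases Nat.eq_zero_or_pos k with rfl | hk
  · simp only [CharP.cast_eq_zero, zero_mul]
    exact mul_nonneg (by positivity) (by unfold dyadicEps decayTerm; positivity)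
  set M := Nat.log 2 k
  set t := k - M
  have hkt : M + t = k := by have := Nat.log_le_self 2 k; omega
  set H := ∑ i ∈ range M, 2 ^ 2 ^ i
  set C := min (2 ^ t) (2 ^ 2 ^ M)
  have hsplit : k * dyadicBound k ≤ k * H + k * (C + 2 ^ t) := by
    rw [← mul_add, ← add_assoc, ← hkt]
    exact Nat.mul_le_mul_left _ (dyadicBound_add_le M t)
  have hhead : (2 : ℝ) ^ (k / 2) * (k * H) ≤ (4 * (k / 2 : ℕ) + 4) * 2 ^ k := by
    exact_mod_cast two_pow_half_mul_sum_le (Nat.pow_log_le_self 2 hk.ne')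
  have htail : (k : ℝ) * (C + 2 ^ t) ≤ 2 * 2 ^ k + (4 * M + 4) * 2 ^ t := by
    have := mul_min_add_le (M := M) (t := t)
      (by rw [hkt]; exact Nat.lt_pow_succ_log_self one_lt_two k)
    rw [hkt] at this
    exact_mod_cast this
  have hM : (2 : ℝ) ^ k * ((4 * M + 4) / 2 ^ M) = (4 * M + 4) * 2 ^ t := by
    rw [← hkt, pow_add]; field_simp
  have hhalf : (k : ℝ) * H ≤ 2 ^ k * decayTerm (k / 2) := by
    rw [decayTerm, mul_div_assoc', le_div_iff₀ (by positivity)]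
    linarith
  have hsplitR : (k : ℝ) * dyadicBound k ≤ k * H + k * (C + 2 ^ t) := by exact_mod_cast hsplit
  have hdecay : decayTerm M = (4 * M + 4) / 2 ^ M := rfl
  rw [dyadicEps, hdecay]
  linarith

theorem tendsto_decayTerm : Tendsto decayTerm atTop (𝓝 0) := by
  have h1 := tendsto_pow_const_div_const_pow_of_one_lt 1 one_lt_two
  have h0 := tendsto_pow_const_div_const_pow_of_one_lt 0 one_lt_two
  convert (h1.const_mul 4).add (h0.const_mul 4) using 2 with m
  · simp only [decayTerm, pow_one, pow_zero]; ring
  · simp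

theorem tendsto_dyadicEps : Tendsto dyadicEps atTop (𝓝 0) := by
  have hhalf : Tendsto (· / 2 : ℕ → ℕ) atTop atTop :=
    tendsto_atTop_atTop_of_monotone (fun _ _ h => Nat.div_le_div_right h)
      fun b => ⟨2 * b, by omega⟩
  have hlog : Tendsto (Nat.log 2) atTop atTop :=
    tendsto_atTop_atTop_of_monotone (fun _ _ h => Nat.log_mono_right h)
      fun b => ⟨2 ^ b, (Nat.log_pow one_lt_two b).ge⟩
  have := (tendsto_decayTerm.comp hhalf).add (tendsto_decayTerm.comp hlog)
  rwa [add_zero] at this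

/-- For `G ∈ 𝒢*` representing a binary string `x` of length `2^k`, the map
`V ↦ φ_G(V)` injects the vertex set of `G` into the dyadic substring set `S(x)`;
consequently `|V(G)| ≤ |S(x)| ≤ ∑_{i=0}^k min(2^{k−i}, 2^{2^i})`, and hence
`|V(G)| ≤ 2^k(2+ε_k)/k` for some sequence `ε_k → 0` independent of `G`. -/
theorem card_vertices_le :
    ∃ ε : ℕ → ℝ, Filter.Tendsto ε Filter.atTop (nhds 0) ∧
      ∀ (V : Type) (_ : Fintype V) (_ : DecidableEq V) (G : BDD V)
        (φ : V → List Bool), IsPhi G φ → Function.Injective φ →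
        (∀ v, φ v ∈ dyadicSet G.k (φ G.root)) ∧
        Fintype.card V ≤ (dyadicSet G.k (φ G.root)).card ∧
        (dyadicSet G.k (φ G.root)).card
          ≤ ∑ i ∈ Finset.range (G.k + 1), min (2 ^ (G.k - i)) (2 ^ (2 ^ i)) ∧
        ((Fintype.card V : ℝ) ≤ (2 : ℝ) ^ G.k * (2 + ε G.k) / (G.k : ℝ)) := by
  refine ⟨dyadicEps, tendsto_dyadicEps, fun V _ _ G φ hφ hinj => ?_⟩
  have hcard : Fintype.card V ≤ #(dyadicSet G.k (φ G.root)) :=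
    Finset.card_le_card_of_injOn φ (fun v _ => hφ.mem_dyadicSet v) hinj.injOn
  have hbound := card_dyadicSet_le hφ.length_root
  refine ⟨hφ.mem_dyadicSet, hcard, hbound, ?_⟩
  rw [le_div_iff₀ (by exact_mod_cast G.k_pos), mul_comm]
  calc (G.k : ℝ) * Fintype.card V ≤ G.k * dyadicBound G.k := by
        gcongr; exact_mod_cast hcard.trans hbound
    _ ≤ 2 ^ G.k * (2 + dyadicEps G.k) := mul_dyadicBound_le G.k
end

section
/- For any G ∈ 𝒢* with terminal level k+1 representing a string x of length 2^k, and the associated level strings S_1,...,S_{k+1}, one has ∑_{i=1}^{k+1} |S_i| ≤ |V(G')| + |V(G)|, where G' is the quasi-reduced OBDD of x (vertices = dyadic substring set S(x)) and V(G) is the vertex set of G. -/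
/-- The list of distinct entries of a sequence, in order of first left-to-right
appearance. -/
def firstOccs {A : Type*} [DecidableEq A] : List A → List A
  | [] => []
  | a :: rest => a :: (firstOccs rest).filter (· ≠ a)

variable {V : Type} [Fintype V] [DecidableEq V]

/-- One step of the recursive generation of the level strings: from `S_{i−1}`, take the
first occurrences of its distinct symbols; a symbol `A_m^q` with `q > 1` produces
`A_m^{q−1}`; a symbol `A_m` (i.e. `q = 1`, a nonterminal vertex) produces the pair
`A_{m₀}^{L(A_{m₀})−L(A_m)}, A_{m₁}^{L(A_{m₁})−L(A_m)}` where `A_{m₀}, A_{m₁}` are its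
`0`- and `1`-successors.  A symbol `A_m^q` is represented as the pair `(A_m, q)`. -/
def nextS (G : BDD V) (s : List (V × ℕ)) : List (V × ℕ) :=
  (firstOccs s).flatMap fun p =>
    if 1 < p.2 then [(p.1, p.2 - 1)]
    else [(G.succ0 p.1, G.level (G.succ0 p.1) - G.level p.1),
          (G.succ1 p.1, G.level (G.succ1 p.1) - G.level p.1)]

/-- The level strings: `Sstr G (i-1)` is the paper's `S_i`, so `Sstr G 0 = S_1 = (A_1)`
consists of the root alone. -/
def Sstr (G : BDD V) : ℕ → List (V × ℕ)
  | 0 => [(G.root, 1)]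
  | i + 1 => nextS G (Sstr G i)

/-- `Ŝ_i` (for the paper's index `i ≥ 2`): the subsequence of `S_i` arising from the
substitutions for the distinct entries of `S_{i−1}` of the form `A_m` (i.e. `q = 1`). -/
def Shat (G : BDD V) (i : ℕ) : List (V × ℕ) :=
  (firstOccs (Sstr G (i - 2))).flatMap fun p =>
    if 1 < p.2 then []
    else [(G.succ0 p.1, G.level (G.succ0 p.1) - G.level p.1),
          (G.succ1 p.1, G.level (G.succ1 p.1) - G.level p.1)]

/-- The vertices that have appeared in the paper's strings `S_1, ..., S_{i−1}`. -/
def appearedBefore (G : BDD V) (i : ℕ) : List V :=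
  (List.range (i - 1)).flatMap fun j => (Sstr G j).map Prod.fst

/-- `Q_i`: the sum of the exponents `q` over the distinct Type II entries `A_m^q` of
`Ŝ_i` (those whose vertex `A_m` has not appeared in `S_1, ..., S_{i−1}`). -/
def Qsum (G : BDD V) (i : ℕ) : ℕ :=
  (((firstOccs (Shat G i)).filter
      (fun p => decide (p.1 ∉ appearedBefore G i))).map Prod.snd).sum

/-!
Write `x = φ(root)` and index the level strings from `0`, so that `S_j` is `Sstr G j`.
An entry `(A, q)` of `S_j` satisfies `L(A) = j + q`, so it spells the string
`φ(A)^{2^{q-1}}` of length `2^{k-j}`; passing from `S_j` to `S_{j+1}` replaces this string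
by its two halves, hence by induction it is a dyadic block of `x`. Since `φ` is injective
and the two children of a vertex differ, distinct entries of `S_j` spell distinct blocks,
and blocks of different lengths differ: the distinct entries of `S_0, …, S_{k-1}` inject
into `S(x)`. An entry with `q = 1` is a vertex at level `j + 1 ≤ k` and contributes one
more symbol to `S_{j+1}`; these vertices are distinct and differ from `T0`, which pays for
`S_0`. As `|S_{j+1}|` is the number of distinct entries of `S_j` plus the number of those
with `q = 1`, the bound follows.
-/

open Finset

section Lists

variable {α : Type*}

lemma List.length_flatten_replicate (n : ℕ) (u : List α) :
    (replicate n u).flatten.length = n * u.length := by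
  simp [length_flatten, sum_replicate]

lemma List.flatten_replicate_two_pow_succ (m : ℕ) (u : List α) :
    (replicate (2 ^ (m + 1)) u).flatten
      = (replicate (2 ^ m) u).flatten ++ (replicate (2 ^ m) u).flatten := by
  rw [pow_succ, mul_two, replicate_add, flatten_append]

lemma firstOccs_sublist [DecidableEq α] : ∀ l : List α, (firstOccs l).Sublist l
  | [] => .slnil
  | a :: l => (List.filter_sublist.trans (firstOccs_sublist l)).cons_cons a

lemma nodup_firstOccs [DecidableEq α] : ∀ l : List α, (firstOccs l).Nodup
  | [] => .nil
  | a :: l => .cons (by simp [List.mem_filter]) ((nodup_firstOccs l).filter _)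

def dyadicBlock (x : List α) (i t : ℕ) : List α := (x.drop (t * 2 ^ i)).take (2 ^ i)

lemma take_dyadicBlock_succ (x : List α) (i t : ℕ) :
    (dyadicBlock x (i + 1) t).take (2 ^ i) = dyadicBlock x i (2 * t) := by
  rw [dyadicBlock, dyadicBlock, List.take_take, min_eq_left (by rw [pow_succ]; omega)]
  congr 2
  ring

lemma drop_dyadicBlock_succ (x : List α) (i t : ℕ) :
    (dyadicBlock x (i + 1) t).drop (2 ^ i) = dyadicBlock x i (2 * t + 1) := by
  rw [dyadicBlock, dyadicBlock, List.drop_take, List.drop_drop, pow_succ]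
  congr 2
  · omega
  · ring

end Lists

lemma dyadicBlock_mem_dyadicSet (x : List Bool) {k i t : ℕ} (hi : i ≤ k)
    (ht : t < 2 ^ (k - i)) :
    dyadicBlock x i t ∈ dyadicSet k x :=
  mem_biUnion.2 ⟨i, mem_range.2 (by omega), mem_image.2 ⟨t, mem_range.2 ht, rfl⟩⟩

namespace BDD

variable (G : BDD V) (φ : V → List Bool)

lemma level_le_k_iff {v : V} : G.level v ≤ G.k ↔ v ≠ G.T0 ∧ v ≠ G.T1 := by
  refine ⟨fun hv => ⟨?_, ?_⟩, fun ⟨h0, h1⟩ => ?_⟩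
  · rintro rfl; have := G.T0_level; omega
  · rintro rfl; have := G.T1_level; omega
  · have := G.level_lt_succ0 v h0 h1; have := G.level_le (G.succ0 v); omega

def block (ℓ : ℕ) (v : V) : List Bool := (List.replicate (2 ^ (G.level v - ℓ)) (φ v)).flatten

def branch (p : V × ℕ) : List (V × ℕ) :=
  if 1 < p.2 then [(p.1, p.2 - 1)]
  else [(G.succ0 p.1, G.level (G.succ0 p.1) - G.level p.1),
        (G.succ1 p.1, G.level (G.succ1 p.1) - G.level p.1)]

lemma nextS_eq_flatMap_branch (s : List (V × ℕ)) :
    nextS G s = (firstOccs s).flatMap G.branch := rfl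

lemma length_flatMap_branch (l : List (V × ℕ)) :
    (l.flatMap G.branch).length = l.length + (l.filter (·.2 ≤ 1)).length := by
  induction l with
  | nil => rfl
  | cons p l ih =>
    rw [List.flatMap_cons, List.length_append, ih, List.filter_cons, branch]
    by_cases hq : 1 < p.2
    · simp only [hq, show ¬p.2 ≤ 1 by omega, ↓reduceIte, decide_false, Bool.false_eq_true,
        List.length_cons, List.length_nil]
      omega
    · simp only [hq, show p.2 ≤ 1 by omega, ↓reduceIte, decide_true, List.length_cons,
        List.length_nil]
      omega

lemma length_Sstr_succ (j : ℕ) :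
    (Sstr G (j + 1)).length
      = (firstOccs (Sstr G j)).length + ((firstOccs (Sstr G j)).filter (·.2 ≤ 1)).length :=
  G.length_flatMap_branch _

variable {G φ}

theorem length_phi (hφ : IsPhi G φ) (v : V) : (φ v).length = 2 ^ (G.k + 1 - G.level v) := by
  by_cases hv : G.level v ≤ G.k
  · obtain ⟨h0, h1⟩ := G.level_le_k_iff.1 hv
    have := G.level_lt_succ0 v h0 h1
    have := G.level_lt_succ1 v h0 h1
    have := G.level_le (G.succ0 v)
    have := G.level_le (G.succ1 v)
    rw [hφ.2.2 v h0 h1, List.length_append, List.length_flatten_replicate,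
      List.length_flatten_replicate, length_phi hφ (G.succ0 v), length_phi hφ (G.succ1 v),
      ← pow_add, ← pow_add]
    have e0 : G.level (G.succ0 v) - G.level v - 1 + (G.k + 1 - G.level (G.succ0 v))
        = G.k - G.level v := by omega
    have e1 : G.level (G.succ1 v) - G.level v - 1 + (G.k + 1 - G.level (G.succ1 v))
        = G.k - G.level v := by omega
    rw [e0, e1, ← two_mul, ← pow_succ']
    congr 1
    omega
  · have hterm : v = G.T0 ∨ v = G.T1 := by
      by_contra h
      exact hv (G.level_le_k_iff.2 (not_or.1 h))
    rcases hterm with rfl | rfl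
    · simp [hφ.1, G.T0_level]
    · simp [hφ.2.1, G.T1_level]
termination_by G.k + 1 - G.level v

lemma length_block (hφ : IsPhi G φ) {ℓ : ℕ} {v : V} (hℓ : ℓ ≤ G.level v) :
    (G.block φ ℓ v).length = 2 ^ (G.k + 1 - ℓ) := by
  have := G.level_le v
  rw [block, List.length_flatten_replicate, length_phi hφ, ← pow_add]
  congr 1
  omega

lemma block_level (v : V) : G.block φ (G.level v) v = φ v := by
  simp [block]

lemma block_eq_append_of_lt {ℓ : ℕ} {v : V} (hℓ : ℓ < G.level v) :
    G.block φ ℓ v = G.block φ (ℓ + 1) v ++ G.block φ (ℓ + 1) v := by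
  rw [block, block, ← List.flatten_replicate_two_pow_succ]
  congr 3
  omega

lemma block_level_eq_append (hφ : IsPhi G φ) {v : V} (hv : G.level v ≤ G.k) :
    G.block φ (G.level v) v
      = G.block φ (G.level v + 1) (G.succ0 v) ++ G.block φ (G.level v + 1) (G.succ1 v) := by
  obtain ⟨h0, h1⟩ := G.level_le_k_iff.1 hv
  rw [block_level, hφ.2.2 v h0 h1, block, block, Nat.sub_sub, Nat.sub_sub]

theorem block_injective (hφ : IsPhi G φ) (hinj : Function.Injective φ) {ℓ : ℕ} {v w : V}
    (hv : ℓ ≤ G.level v) (hw : ℓ ≤ G.level w) (h : G.block φ ℓ v = G.block φ ℓ w) :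
    v = w := by
  wlog hvw : G.level v ≤ G.level w generalizing v w
  · exact (this hw hv h.symm (by omega)).symm
  have := G.level_le w
  rcases hv.eq_or_lt with rfl | hlt
  · rcases hw.eq_or_lt with hw' | hlt'
    · rw [block_level, hw', block_level] at h
      exact hinj h
    -- `ℓ = L(v) < L(w)`: both halves of `φ v` are spelled by `w`, so `succ0 v = w = succ1 v`
    obtain ⟨h0, h1⟩ := G.level_le_k_iff.1 (by omega : G.level v ≤ G.k)
    have := G.level_lt_succ0 v h0 h1
    have := G.level_lt_succ1 v h0 h1
    rw [block_level_eq_append hφ (by omega), block_eq_append_of_lt hlt'] at h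
    obtain ⟨h₀, h₁⟩ :=
      List.append_inj h (by rw [length_block hφ, length_block hφ] <;> omega)
    exact absurd ((block_injective hφ hinj (by omega) (by omega) h₀).trans
      (block_injective hφ hinj (by omega) (by omega) h₁).symm) (G.succ_ne v h0 h1)
  · rw [block_eq_append_of_lt hlt, block_eq_append_of_lt (v := w) (by omega)] at h
    exact block_injective hφ hinj hlt (by omega)
      (List.append_inj h (by rw [length_block hφ, length_block hφ] <;> omega)).1
termination_by G.k + 1 - ℓ

lemma level_of_mem_branch {j : ℕ} (hj : j < G.k) {a p : V × ℕ}
    (ha : j < G.level a.1 ∧ a.2 = G.level a.1 - j) (hp : p ∈ G.branch a) :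
    j + 1 < G.level p.1 ∧ p.2 = G.level p.1 - (j + 1) := by
  rw [branch] at hp
  split_ifs at hp with hq
  · rw [List.mem_singleton] at hp
    subst hp
    dsimp only
    constructor <;> omega
  · obtain ⟨h0, h1⟩ := G.level_le_k_iff.1 (by omega : G.level a.1 ≤ G.k)
    have := G.level_lt_succ0 a.1 h0 h1
    have := G.level_lt_succ1 a.1 h0 h1
    simp only [List.mem_cons, List.not_mem_nil, or_false] at hp
    rcases hp with rfl | rfl <;> dsimp only <;> constructor <;> omega

lemma block_of_mem_branch (hφ : IsPhi G φ) {j : ℕ} (hj : j < G.k) {a p : V × ℕ}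
    (ha : j < G.level a.1 ∧ a.2 = G.level a.1 - j) (hp : p ∈ G.branch a) :
    (G.block φ (j + 1) a.1).take (2 ^ (G.k - (j + 1))) = G.block φ (j + 2) p.1 ∨
      (G.block φ (j + 1) a.1).drop (2 ^ (G.k - (j + 1))) = G.block φ (j + 2) p.1 := by
  have hlen : ∀ {u : V}, j + 2 ≤ G.level u →
      (G.block φ (j + 2) u).length = 2 ^ (G.k - (j + 1)) := fun hu => by
    rw [length_block hφ hu]; congr 1; omega
  have hp' := level_of_mem_branch hj ha hp
  rw [branch] at hp
  split_ifs at hp with hq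
  · rw [List.mem_singleton] at hp
    subst hp
    rw [block_eq_append_of_lt (by omega)]
    exact .inl (List.take_left' (hlen hp'.1))
  · obtain ⟨h0, h1⟩ := G.level_le_k_iff.1 (by omega : G.level a.1 ≤ G.k)
    have := G.level_lt_succ0 a.1 h0 h1
    have hsplit := block_level_eq_append hφ (by omega : G.level a.1 ≤ G.k)
    rw [show G.level a.1 = j + 1 by omega] at hsplit
    simp only [List.mem_cons, List.not_mem_nil, or_false] at hp
    rcases hp with rfl | rfl
    · exact .inl (by rw [hsplit]; exact List.take_left' (hlen hp'.1))
    · exact .inr (by rw [hsplit]; exact List.drop_left' (hlen (by omega)))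

lemma level_of_mem_Sstr {j : ℕ} (hj : j ≤ G.k) {p : V × ℕ} (hp : p ∈ Sstr G j) :
    j < G.level p.1 ∧ p.2 = G.level p.1 - j := by
  induction j generalizing p with
  | zero =>
    rw [Sstr, List.mem_singleton] at hp
    subst hp
    simp [G.root_level]
  | succ j ih =>
    rw [Sstr, nextS_eq_flatMap_branch, List.mem_flatMap] at hp
    obtain ⟨a, ha, hpa⟩ := hp
    exact level_of_mem_branch (by omega) (ih (by omega) ((firstOccs_sublist _).subset ha)) hpa

lemma block_of_mem_Sstr (hφ : IsPhi G φ) {j : ℕ} (hj : j ≤ G.k) {p : V × ℕ}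
    (hp : p ∈ Sstr G j) :
    ∃ t < 2 ^ j, G.block φ (j + 1) p.1 = dyadicBlock (φ G.root) (G.k - j) t := by
  induction j generalizing p with
  | zero =>
    rw [Sstr, List.mem_singleton] at hp
    subst hp
    refine ⟨0, by norm_num, ?_⟩
    rw [zero_add, ← G.root_level, block_level, dyadicBlock, zero_mul, List.drop_zero,
      List.take_of_length_le (by rw [length_phi hφ, G.root_level]; simp)]
  | succ j ih =>
    rw [Sstr, nextS_eq_flatMap_branch, List.mem_flatMap] at hp
    obtain ⟨a, ha, hpa⟩ := hp
    have haS := (firstOccs_sublist _).subset ha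
    obtain ⟨t, ht, hat⟩ := ih (by omega) haS
    have hhalf := block_of_mem_branch hφ (by omega) (level_of_mem_Sstr (by omega) haS) hpa
    rw [hat, show G.k - j = G.k - (j + 1) + 1 by omega] at hhalf
    rcases hhalf with h | h
    · exact ⟨2 * t, by rw [pow_succ]; omega, by rw [← h, take_dyadicBlock_succ]⟩
    · exact ⟨2 * t + 1, by rw [pow_succ]; omega, by rw [← h, drop_dyadicBlock_succ]⟩

lemma eq_of_mem_Sstr_of_fst_eq {j : ℕ} (hj : j ≤ G.k) {p p' : V × ℕ} (hp : p ∈ Sstr G j)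
    (hp' : p' ∈ Sstr G j) (h : p.1 = p'.1) : p = p' :=
  Prod.ext h (by rw [(level_of_mem_Sstr hj hp).2, (level_of_mem_Sstr hj hp').2, h])

theorem sum_length_firstOccs_le (hφ : IsPhi G φ) (hinj : Function.Injective φ) :
    ∑ j ∈ range G.k, (firstOccs (Sstr G j)).length ≤ (dyadicSet G.k (φ G.root)).card := by
  calc ∑ j ∈ range G.k, (firstOccs (Sstr G j)).length
      = ((range G.k).sigma fun j => (firstOccs (Sstr G j)).toFinset).card := by
        rw [card_sigma]
        exact sum_congr rfl fun j _ => (List.toFinset_card_of_nodup (nodup_firstOccs _)).symm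
    _ ≤ _ := by
      refine card_le_card_of_injOn (fun e => G.block φ (e.1 + 1) e.2.1) ?_ ?_
      · rintro ⟨j, p⟩ he
        simp only [coe_sigma, Set.mem_sigma_iff, coe_range, Set.mem_Iio, mem_coe,
          List.mem_toFinset] at he
        obtain ⟨t, ht, h⟩ := block_of_mem_Sstr hφ he.1.le ((firstOccs_sublist _).subset he.2)
        change G.block φ (j + 1) p.1 ∈ dyadicSet G.k (φ G.root)
        rw [h]
        exact dyadicBlock_mem_dyadicSet _ (by omega) (by rwa [Nat.sub_sub_self he.1.le])
      · rintro ⟨j, p⟩ he ⟨j', p'⟩ he' h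
        simp only [coe_sigma, Set.mem_sigma_iff, coe_range, Set.mem_Iio, mem_coe,
          List.mem_toFinset] at he he' h
        have hp := (firstOccs_sublist _).subset he.2
        have hp' := (firstOccs_sublist _).subset he'.2
        have hl := level_of_mem_Sstr he.1.le hp
        have hl' := level_of_mem_Sstr he'.1.le hp'
        obtain rfl : j = j' := by
          have := congrArg List.length h
          rw [length_block hφ hl.1, length_block hφ hl'.1] at this
          have := Nat.pow_right_injective le_rfl this
          omega
        rw [eq_of_mem_Sstr_of_fst_eq he.1.le hp hp' (block_injective hφ hinj hl.1 hl'.1 h)]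

theorem sum_length_filter_add_one_le :
    ∑ j ∈ range G.k, ((firstOccs (Sstr G j)).filter (·.2 ≤ 1)).length + 1
      ≤ Fintype.card V := by
  have hcard : ((range G.k).sigma fun j =>
      ((firstOccs (Sstr G j)).filter (·.2 ≤ 1)).toFinset).card ≤ (univ.erase G.T0).card := by
    refine card_le_card_of_injOn (fun e => e.2.1) ?_ ?_
    · rintro ⟨j, p⟩ he
      simp only [coe_sigma, Set.mem_sigma_iff, coe_range, Set.mem_Iio, mem_coe,
        List.mem_toFinset, List.mem_filter, decide_eq_true_eq] at he
      have hl := level_of_mem_Sstr he.1.le ((firstOccs_sublist _).subset he.2.1)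
      simp only [coe_erase, coe_univ, Set.mem_sdiff, Set.mem_univ, Set.mem_singleton_iff,
        true_and]
      rintro hT
      have := G.T0_level
      rw [hT] at hl
      omega
    · rintro ⟨j, p⟩ he ⟨j', p'⟩ he' h
      simp only [coe_sigma, Set.mem_sigma_iff, coe_range, Set.mem_Iio, mem_coe,
        List.mem_toFinset, List.mem_filter, decide_eq_true_eq] at he he' h
      have hp := (firstOccs_sublist _).subset he.2.1
      have hp' := (firstOccs_sublist _).subset he'.2.1
      have hl := level_of_mem_Sstr he.1.le hp
      have hl' := level_of_mem_Sstr he'.1.le hp'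
      obtain rfl : j = j' := by rw [h] at hl; omega
      rw [eq_of_mem_Sstr_of_fst_eq he.1.le hp hp' h]
  rw [card_sigma, card_erase_of_mem (mem_univ _), card_univ] at hcard
  have := Fintype.card_pos_iff.2 ⟨G.T0⟩
  rw [← sum_congr rfl fun j _ =>
    List.toFinset_card_of_nodup ((nodup_firstOccs (Sstr G j)).filter _)]
  omega

end BDD

/-- For `G ∈ 𝒢*` with terminal level `k+1` representing a string `x` of length `2^k`,
the level strings `S_1, ..., S_{k+1}` satisfy
`∑_{i=1}^{k+1} |S_i| ≤ |V(G')| + |V(G)|`, where `G'` is the quasi-reduced OBDD of `x`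
(its vertex set is the dyadic substring set `S(x)`). -/
theorem total_length_le_card (G : BDD V) (φ : V → List Bool)
    (hφ : IsPhi G φ) (hinj : Function.Injective φ) :
    ∑ i ∈ Finset.Icc 1 (G.k + 1), (Sstr G (i - 1)).length
      ≤ (dyadicSet G.k (φ G.root)).card + Fintype.card V := by
  calc ∑ i ∈ Icc 1 (G.k + 1), (Sstr G (i - 1)).length
      = ∑ j ∈ range (G.k + 1), (Sstr G j).length := by
        rw [← Finset.Ico_add_one_right_eq_Icc, sum_Ico_eq_sum_range]
        simp
    _ = ∑ j ∈ range G.k, (firstOccs (Sstr G j)).length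
          + (∑ j ∈ range G.k, ((firstOccs (Sstr G j)).filter (·.2 ≤ 1)).length + 1) := by
        rw [sum_range_succ', sum_congr rfl fun j _ => G.length_Sstr_succ j, sum_add_distrib,
          add_assoc]
        rfl
    _ ≤ _ := add_le_add (BDD.sum_length_firstOccs_le hφ hinj) G.sum_length_filter_add_one_le
end
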